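/- arXiv:2605.24780 — 3 statements merged into one kernel-verified Lean document; each statement's English description precedes it below -/
import Mathlib

section
/- For every real number t ≥ 0, t / tanh(t) ≤ 1 + t, with the convention that at t = 0 the left-hand side is interpreted via its limit value 1 (equivalently, t ≤ (1 + t)·tanh(t) for all t ≥ 0). -/
theorem t_le_one_add_mul_tanh (t : ℝ) (ht : 0 ≤ t) :
    t ≤ (1 + t) * Real.tanh t := by
  rw [Real.tanh_eq_sinh_div_cosh, ← mul_div_assoc, le_div_iff₀ (Real.cosh_pos t),
    Real.sinh_eq, Real.cosh_eq]
  have h1 : Real.exp (-t) * Real.exp (2*t) = Real.exp t := by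
    rw [← Real.exp_add]; ring_nf
  have h2 : Real.exp (-t) * (1 + 2*t) ≤ Real.exp (-t) * Real.exp (2*t) :=
    mul_le_mul_of_nonneg_left (by linarith [Real.add_one_le_exp (2*t)]) (Real.exp_pos (-t)).le
  nlinarith [Real.exp_pos (-t)]
end

section
/- For all real numbers a ≥ b > 0, the quantity N := (a/b)·sinh(a)·sinh(b) − cosh(a)·cosh(b) satisfies N > −1 whenever a > b, and N = −1 is never attained for a > b > 0; more precisely, with ξ = a + b and η = a − b one has N = (η·cosh(ξ) − ξ·cosh(η))/(ξ − η) > −1. -/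
/-!
With `ξ = a + b` and `η = a - b`, the addition formulas for `cosh` give the closed form of `N`,
and `N > -1` becomes `(cosh η - 1) / η < (cosh ξ - 1) / ξ` for `0 < η < ξ`: the slopes of the
chords of the strictly convex function `cosh` from the point `(0, 1)` increase.
-/

open Real Set

theorem Real.strictConvexOn_cosh : StrictConvexOn ℝ univ cosh :=
  StrictMono.strictConvexOn_univ_of_deriv continuous_cosh (by rw [deriv_cosh]; exact sinh_strictMono)

theorem Real.cosh_sub_one_div_lt {x y : ℝ} (hx : 0 < x) (hxy : x < y) :
    (cosh x - 1) / x < (cosh y - 1) / y := by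
  simpa [cosh_zero] using
    strictConvexOn_cosh.secant_strict_mono (mem_univ 0) (mem_univ x) (mem_univ y)
      hx.ne' (hx.trans hxy).ne' hxy

theorem Real.div_mul_sinh_mul_sinh_sub_cosh_mul_cosh {a b : ℝ} (hb : b ≠ 0) :
    a / b * sinh a * sinh b - cosh a * cosh b
      = ((a - b) * cosh (a + b) - (a + b) * cosh (a - b)) / ((a + b) - (a - b)) := by
  rw [cosh_add, cosh_sub, eq_div_iff (by intro h; apply hb; linarith)]
  field_simp
  ring

theorem Real.neg_one_lt_mul_cosh_sub_mul_cosh_div {η ξ : ℝ} (hη : 0 < η) (hηξ : η < ξ) :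
    -1 < (η * cosh ξ - ξ * cosh η) / (ξ - η) := by
  have hslope := cosh_sub_one_div_lt hη hηξ
  rw [div_lt_div_iff₀ hη (hη.trans hηξ)] at hslope
  rw [lt_div_iff₀ (sub_pos.mpr hηξ)]
  linarith

theorem N_gt_neg_one (a b : ℝ) (hb : 0 < b) (hab : b < a) :
    ((a / b) * Real.sinh a * Real.sinh b - Real.cosh a * Real.cosh b
        = ((a - b) * Real.cosh (a + b) - (a + b) * Real.cosh (a - b)) / ((a + b) - (a - b))) ∧
      (a / b) * Real.sinh a * Real.sinh b - Real.cosh a * Real.cosh b > -1 := by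
  have hN := div_mul_sinh_mul_sinh_sub_cosh_mul_cosh (a := a) hb.ne'
  refine ⟨hN, ?_⟩
  rw [hN]
  exact neg_one_lt_mul_cosh_sub_mul_cosh_div (by linarith) (by linarith)
end

section
/- Let (d_k) be a sequence of nonnegative reals and κ > 0 such that cosh(κ·d_{k+1}) ≤ cosh(κ·d_k)·(1 + κ²·λ_k²) for all k ≥ k₀, where (λ_k) is nonnegative with ∑ λ_k² < ∞. If some subsequence d_{k_j} → 0, then d_k → 0. -/
open Filter Finset Real

theorem subseq_to_full_convergence (d lam : ℕ → ℝ) (hd : ∀ k, 0 ≤ d k)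
    (hlam : ∀ k, 0 ≤ lam k) (hsum : Summable fun k => (lam k) ^ 2)
    (κ : ℝ) (hκ : 0 < κ) (k₀ : ℕ)
    (hrec : ∀ k, k₀ ≤ k →
      Real.cosh (κ * d (k + 1)) ≤ Real.cosh (κ * d k) * (1 + κ ^ 2 * (lam k) ^ 2))
    (φ : ℕ → ℕ) (hφ : StrictMono φ)
    (hsub : Filter.Tendsto (fun j => d (φ j)) Filter.atTop (nhds 0)) :
    Filter.Tendsto d Filter.atTop (nhds 0) := by
  set a : ℕ → ℝ := fun k => κ ^ 2 * lam k ^ 2 with ha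
  have ha0 : ∀ k, 0 ≤ a k := fun k => mul_nonneg (sq_nonneg κ) (sq_nonneg _)
  have hsa : Summable a := hsum.mul_left _
  set c : ℕ → ℝ := fun k => Real.cosh (κ * d k) with hc
  have hc1 : ∀ k, 1 ≤ c k := fun k => Real.one_le_cosh _
  -- product bound
  have key : ∀ m, k₀ ≤ m → ∀ n, m ≤ n → c n ≤ c m * ∏ k ∈ Finset.Ico m n, (1 + a k) := by
    intro m hm n hn
    induction n, hn using Nat.le_induction with
    | base => simp
    | succ n hmn ih =>
      have h1 : c (n + 1) ≤ c n * (1 + a n) := hrec n (hm.trans hmn)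
      have h2 : c n * (1 + a n) ≤ (c m * ∏ k ∈ Finset.Ico m n, (1 + a k)) * (1 + a n) := by
        apply mul_le_mul_of_nonneg_right ih
        linarith [ha0 n]
      rw [Finset.prod_Ico_succ_top hmn]
      calc c (n + 1) ≤ c n * (1 + a n) := h1
        _ ≤ _ := h2
        _ = c m * ((∏ k ∈ Finset.Ico m n, (1 + a k)) * (1 + a n)) := by ring
  -- tail sum
  set T : ℕ → ℝ := fun m => ∑' k, a (k + m) with hT
  have hTnonneg : ∀ m, 0 ≤ T m := fun m => tsum_nonneg (fun k => ha0 _)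
  have hTtend : Tendsto T atTop (nhds 0) := tendsto_sum_nat_add a
  have prodle : ∀ m n, m ≤ n → (∏ k ∈ Finset.Ico m n, (1 + a k)) ≤ Real.exp (T m) := by
    intro m n hmn
    have h1 : (∏ k ∈ Finset.Ico m n, (1 + a k)) ≤ ∏ k ∈ Finset.Ico m n, Real.exp (a k) := by
      apply Finset.prod_le_prod
      · intro k _; linarith [ha0 k]
      · intro k _; rw [add_comm]; exact Real.add_one_le_exp (a k)
    rw [← Real.exp_sum] at h1
    refine h1.trans (Real.exp_le_exp.2 ?_)
    rw [Finset.sum_Ico_eq_sum_range]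
    have := Summable.sum_le_tsum (f := fun k => a (k + m)) (Finset.range (n - m))
      (fun k _ => ha0 _) ((summable_nat_add_iff m).2 hsa)
    refine le_trans (le_of_eq ?_) this
    apply Finset.sum_congr rfl
    intro k _; rw [add_comm m k]
  -- the combined bound along the subsequence
  have hφtop : Tendsto φ atTop atTop := hφ.tendsto_atTop
  have hB : Tendsto (fun j => c (φ j) * Real.exp (T (φ j))) atTop (nhds 1) := by
    have h1 : Tendsto (fun j => c (φ j)) atTop (nhds 1) := by
      have : Tendsto (fun j => Real.cosh (κ * d (φ j))) atTop (nhds (Real.cosh (κ * 0))) :=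
        (Real.continuous_cosh.tendsto _).comp (hsub.const_mul κ)
      simpa using this
    have h2 : Tendsto (fun j => Real.exp (T (φ j))) atTop (nhds 1) := by
      have : Tendsto (fun j => Real.exp (T (φ j))) atTop (nhds (Real.exp 0)) :=
        (Real.continuous_exp.tendsto _).comp (hTtend.comp hφtop)
      simpa using this
    simpa using h1.mul h2
  -- eventual bound on c
  have hcbound : ∀ A : ℝ, 1 < A → ∀ᶠ n in atTop, c n < A := by
    intro A hA
    have h1 : ∀ᶠ j in atTop, c (φ j) * Real.exp (T (φ j)) < A :=
      hB.eventually_lt_const hA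
    have h2 : ∀ᶠ j in atTop, k₀ ≤ φ j := hφtop.eventually_ge_atTop k₀
    obtain ⟨j, hj1, hj2⟩ := (h1.and h2).exists
    filter_upwards [eventually_ge_atTop (φ j)] with n hn
    calc c n ≤ c (φ j) * ∏ k ∈ Finset.Ico (φ j) n, (1 + a k) := key _ hj2 n hn
      _ ≤ c (φ j) * Real.exp (T (φ j)) := by
          apply mul_le_mul_of_nonneg_left (prodle _ _ hn)
          linarith [hc1 (φ j)]
      _ < A := hj1
  -- conclude
  rw [Metric.tendsto_atTop]
  intro ε hε
  have hcosh : 1 < Real.cosh (κ * ε) := Real.one_lt_cosh.2 (by positivity)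
  obtain ⟨N, hN⟩ := (hcbound _ hcosh).exists_forall_of_atTop
  refine ⟨N, fun n hn => ?_⟩
  have h := hN n hn
  have hlt : |κ * d n| < |κ * ε| := Real.cosh_lt_cosh.1 h
  rw [abs_of_nonneg (mul_nonneg hκ.le (hd n)), abs_of_nonneg (mul_nonneg hκ.le hε.le)] at hlt
  have : d n < ε := lt_of_mul_lt_mul_left hlt hκ.le
  rw [Real.dist_eq, sub_zero, abs_of_nonneg (hd n)]
  exact this
end
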